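/- Let $R$ be the free associative algebra over $\mathbb{F}_2$, and let $s, t, \mu_1, \mu_2, \mu_3, \tau_2 \in R$ satisfy $t\mu_2 = \tau_2 s$. Define $u_1 = \mu_1(s+1)$, $v_1 = \mu_1 s$, $u_2 = \tau_2(s+1)$, $v_2 = (t+1)\mu_2$, $u_3 = t\mu_3$, $v_3 = (t+1)\mu_3$. Then every $x \in R$ with $sx = xt$ satisfies $u_1 x u_2 x u_3 = v_1 x v_2 x v_3$. -/

import Mathlib

/-!
Intertwining `s x = x t` also gives `(s + 1) x = x (t + 1)`; pushing `x` to the left through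
these relations and trading `τ₂ s` for `t μ₂` turns both sides into `μ₁ x (t + 1) t μ₂ x (t + 1) μ₃`.
-/

section Semiring

variable {R : Type*} [Semiring R]

theorem add_one_mul_eq_mul_add_one {s t x : R} (hx : s * x = x * t) :
    (s + 1) * x = x * (t + 1) := by
  rw [add_mul, mul_add, hx, one_mul, mul_one]

theorem mul_add_one_mul_mul_add_one_mul_eq {s t x μ₁ μ₂ μ₃ τ₂ : R}
    (hx : s * x = x * t) (hrel : t * μ₂ = τ₂ * s) :
    μ₁ * (s + 1) * x * (τ₂ * (s + 1)) * x * (t * μ₃) =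
      μ₁ * s * x * ((t + 1) * μ₂) * x * ((t + 1) * μ₃) := by
  have hx₁ := add_one_mul_eq_mul_add_one hx
  have hs : Commute (s + 1) s := (Commute.refl s).add_left (Commute.one_left s)
  have ht : Commute (t + 1) t := (Commute.refl t).add_left (Commute.one_left t)
  calc μ₁ * (s + 1) * x * (τ₂ * (s + 1)) * x * (t * μ₃)
      = μ₁ * ((s + 1) * x) * τ₂ * ((s + 1) * (x * t)) * μ₃ := by simp only [mul_assoc]
    _ = μ₁ * (x * (t + 1)) * τ₂ * ((s + 1) * (s * x)) * μ₃ := by rw [hx₁, hx]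
    _ = μ₁ * x * (t + 1) * (τ₂ * s) * ((s + 1) * x) * μ₃ := by
      rw [hs.left_comm]; simp only [mul_assoc]
    _ = μ₁ * x * (t + 1) * (t * μ₂) * (x * (t + 1)) * μ₃ := by rw [hrel, hx₁]
    _ = μ₁ * (x * t) * ((t + 1) * μ₂) * x * ((t + 1) * μ₃) := by
      rw [mul_assoc _ (t + 1), ht.left_comm]; simp only [mul_assoc]
    _ = μ₁ * s * x * ((t + 1) * μ₂) * x * ((t + 1) * μ₃) := by rw [← hx]; simp only [mul_assoc]

end Semiring

/-- (Easy direction of Proposition 4.11.) With coefficients of the special form built from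
`s, t, μᵢ, τ₂` with `tμ₂ = τ₂s`, every solution of `sx = xt` solves `u₁xu₂xu₃ = v₁xv₂xv₃`. -/
theorem solution_of_linear_solves_quadratic {σ : Type*}
    (s t μ₁ μ₂ μ₃ τ₂ u₁ v₁ u₂ v₂ u₃ v₃ x : FreeAlgebra (ZMod 2) σ)
    (hrel : t * μ₂ = τ₂ * s)
    (hu₁ : u₁ = μ₁ * (s + 1)) (hv₁ : v₁ = μ₁ * s)
    (hu₂ : u₂ = τ₂ * (s + 1)) (hv₂ : v₂ = (t + 1) * μ₂)
    (hu₃ : u₃ = t * μ₃) (hv₃ : v₃ = (t + 1) * μ₃)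
    (hx : s * x = x * t) :
    u₁ * x * u₂ * x * u₃ = v₁ * x * v₂ * x * v₃ := by
  subst hu₁ hv₁ hu₂ hv₂ hu₃ hv₃
  exact mul_add_one_mul_mul_add_one_mul_eq hx hrel
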